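/- arXiv:2304.11806 — 4 statements merged into one kernel-verified Lean document; each statement's English description precedes it below -/
import Mathlib

section
/- Let (Q,d) be a compact separable metric space and let P(Q) denote the Borel probability measures on Q equipped with the Prohorov metric ρ and the corresponding Borel σ-algebra. Fix m ∈ ℕ and n_1,…,n_m ∈ ℕ, and for each i = 1,…,m let J_{n_i} : ℝ^{n_i} × P(Q) → ℝ be a function such that y_i ↦ J_{n_i}(y_i;P) is Borel measurable for each fixed P ∈ P(Q), and P ↦ J_{n_i}(y_i;P) is continuous on (P(Q),ρ) for each fixed y_i ∈ ℝ^{n_i}. Define J(y;P) = Σ_{i=1}^m J_{n_i}(y_i;P) for y = (y_1,…,y_m) ∈ ∏_{i=1}^m ℝ^{n_i}. Then there exists a Borel measurable function P̂ : ∏_{i=1}^m ℝ^{n_i} → P(Q) such that J(y;P̂(y)) = inf_{P ∈ P(Q)} J(y;P) for every y ∈ ∏_{i=1}^m ℝ^{n_i}. -/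
/-!
For a function `F x s` measurable in `x` and continuous in `s` on a compact metric space, the
set of `x` for which a closed set `C` contains a minimizer of `F x` is measurable: it is
`{x | inf_C F x ≤ inf F x}`, and both infima may be taken over countable dense sets. At scale
`2⁻ⁿ`, take the first point of a dense sequence whose closed ball meets the previous ball in a
minimizer. These centers depend measurably on `x`, take countably many values, and form a Cauchy
sequence whose limit minimizes `F x`. Prokhorov's theorem makes the probability measures on a
compact metric space a compact metric space under the Lévy–Prokhorov metric, so this applies to
the least-squares cost.
-/

open MeasureTheory Filter Topology TopologicalSpace Set Metric

section InfMeasurable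

variable {X K : Type*} [MeasurableSpace X] [TopologicalSpace K] {F : X → K → ℝ}

theorem measurable_iInf_of_continuous [SeparableSpace K] (hFm : ∀ k, Measurable (F · k))
    (hFc : ∀ x, Continuous (F x)) : Measurable fun x => ⨅ k, F x k := by
  obtain ⟨D, hDc, hD⟩ := exists_countable_dense K
  have := hDc.to_subtype
  simp_rw [← hD.ciInf' (hFc _)]
  exact .iInf fun k => hFm k

end InfMeasurable

section MeasurableArgmin

variable {X S : Type*} {F : X → S → ℝ}

def HasMinimizerIn (F : X → S → ℝ) (x : X) (C : Set S) : Prop :=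
  ∃ s ∈ C, ∀ t, F x s ≤ F x t

theorem HasMinimizerIn.mono {x : X} {C D : Set S} (h : HasMinimizerIn F x C) (hCD : C ⊆ D) :
    HasMinimizerIn F x D :=
  let ⟨s, hsC, hs⟩ := h
  ⟨s, hCD hsC, hs⟩

variable [MetricSpace S] [CompactSpace S]

theorem hasMinimizerIn_univ [Nonempty S] (hFc : ∀ x, Continuous (F x)) (x : X) :
    HasMinimizerIn F x univ :=
  let ⟨s, _, hs⟩ := isCompact_univ.exists_isMinOn univ_nonempty (hFc x).continuousOn
  ⟨s, mem_univ s, fun t => hs (mem_univ t)⟩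

theorem measurableSet_hasMinimizerIn [MeasurableSpace X] (hFm : ∀ s, Measurable (F · s))
    (hFc : ∀ x, Continuous (F x)) {C : Set S} (hC : IsClosed C) :
    MeasurableSet {x | HasMinimizerIn F x C} := by
  rcases C.eq_empty_or_nonempty with rfl | hne
  · simp [HasMinimizerIn]
  have : CompactSpace C := isCompact_iff_compactSpace.mp hC.isCompact
  have : Nonempty S := hne.to_subtype.map Subtype.val
  convert measurableSet_le (measurable_iInf_of_continuous (F := fun x (s : C) => F x s)
    (fun s => hFm s) fun x => (hFc x).comp continuous_subtype_val)
    (measurable_iInf_of_continuous hFm hFc) using 1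
  ext x
  obtain ⟨s₀, hs₀C, hs₀⟩ := hC.isCompact.exists_isMinOn hne (hFc x).continuousOn
  have hbdd : BddBelow (range (F x)) := (isCompact_range (hFc x)).bddBelow
  rw [mem_ofPred_eq, mem_ofPred_eq, hs₀.iInf_eq hs₀C, le_ciInf_iff hbdd]
  exact ⟨fun ⟨s, hsC, hs⟩ t => (hs₀ hsC).trans (hs t), fun h => ⟨s₀, hs₀C, h⟩⟩

variable [Nonempty S]

theorem exists_hasMinimizerIn_inter_closedBall (x : X) (C : Set S) (n : ℕ) :
    ∃ j, HasMinimizerIn F x C →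
      HasMinimizerIn F x (C ∩ closedBall (denseSeq S j) ((1 / 2) ^ n)) := by
  by_cases h : HasMinimizerIn F x C
  · obtain ⟨s, hsC, hs⟩ := h
    obtain ⟨j, hj⟩ := (denseRange_denseSeq S).exists_dist_lt s (pow_pos one_half_pos n)
    exact ⟨j, fun _ => ⟨s, ⟨hsC, mem_closedBall.mpr hj.le⟩, hs⟩⟩
  · exact ⟨0, fun h' => absurd h' h⟩

open Classical in
/-- The implication makes the search total, so that `Nat.find` is measurable in `x`
(`measurable_find`); the value only matters when `C` contains a minimizer. -/
noncomputable def nextCenter (F : X → S → ℝ) (C : Set S) (n : ℕ) (x : X) : ℕ :=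
  Nat.find (exists_hasMinimizerIn_inter_closedBall (F := F) x C n)

theorem hasMinimizerIn_nextCenter {x : X} {C : Set S} (n : ℕ) (h : HasMinimizerIn F x C) :
    HasMinimizerIn F x (C ∩ closedBall (denseSeq S (nextCenter F C n x)) ((1 / 2) ^ n)) := by
  classical
  exact Nat.find_spec (exists_hasMinimizerIn_inter_closedBall x C n) h

theorem measurable_nextCenter [MeasurableSpace X] (hFm : ∀ s, Measurable (F · s))
    (hFc : ∀ x, Continuous (F x)) {C : Set S} (hC : IsClosed C) (n : ℕ) :
    Measurable (nextCenter F C n) := by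
  classical
  exact measurable_find _ fun j => (measurableSet_hasMinimizerIn hFm hFc hC).imp
    (measurableSet_hasMinimizerIn hFm hFc (hC.inter isClosed_closedBall))

noncomputable def centerIdx (F : X → S → ℝ) (x : X) : ℕ → ℕ
  | 0 => nextCenter F univ 0 x
  | n + 1 => nextCenter F (closedBall (denseSeq S (centerIdx F x n)) ((1 / 2) ^ n)) (n + 1) x

noncomputable def ballCenter (F : X → S → ℝ) (x : X) (n : ℕ) : S :=
  denseSeq S (centerIdx F x n)

theorem ballCenter_zero (x : X) : ballCenter F x 0 = denseSeq S (nextCenter F univ 0 x) := rfl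

theorem ballCenter_succ (x : X) (n : ℕ) :
    ballCenter F x (n + 1) =
      denseSeq S (nextCenter F (closedBall (ballCenter F x n) ((1 / 2) ^ n)) (n + 1) x) :=
  rfl

theorem measurable_ballCenter [MeasurableSpace X] [MeasurableSpace S] [BorelSpace S]
    (hFm : ∀ s, Measurable (F · s)) (hFc : ∀ x, Continuous (F x))
    (n : ℕ) : Measurable (ballCenter F · n) := by
  suffices Measurable (centerIdx F · n) from measurable_from_nat.comp this
  induction n with
  | zero => exact measurable_nextCenter hFm hFc isClosed_univ 0
  | succ n ih =>
    have hstep (j : ℕ) :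
        Measurable (nextCenter F (closedBall (denseSeq S j) ((1 / 2) ^ n)) (n + 1)) :=
      measurable_nextCenter hFm hFc isClosed_closedBall (n + 1)
    exact (measurable_from_prod_countable_left (f := fun p : X × ℕ =>
      nextCenter F (closedBall (denseSeq S p.2) ((1 / 2) ^ n)) (n + 1) p.1) hstep).comp
        (measurable_id.prodMk ih)

variable (hFc : ∀ x, Continuous (F x)) (x : X)
include hFc

theorem hasMinimizerIn_closedBall_ballCenter (n : ℕ) :
    HasMinimizerIn F x (closedBall (ballCenter F x n) ((1 / 2) ^ n)) := by
  induction n with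
  | zero =>
    rw [ballCenter_zero]
    exact (hasMinimizerIn_nextCenter 0 (hasMinimizerIn_univ hFc x)).mono inter_subset_right
  | succ n ih =>
    rw [ballCenter_succ]
    exact (hasMinimizerIn_nextCenter (n + 1) ih).mono inter_subset_right

theorem dist_ballCenter_succ_le (n : ℕ) :
    dist (ballCenter F x n) (ballCenter F x (n + 1)) ≤ 2 * (1 / 2) ^ n := by
  obtain ⟨s, ⟨hs, hs'⟩, -⟩ :=
    hasMinimizerIn_nextCenter (n + 1) (hasMinimizerIn_closedBall_ballCenter hFc x n)
  rw [← ballCenter_succ, mem_closedBall] at hs'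
  rw [mem_closedBall] at hs
  have : ((1 : ℝ) / 2) ^ (n + 1) ≤ (1 / 2) ^ n :=
    pow_le_pow_of_le_one (by norm_num) (by norm_num) n.le_succ
  calc dist (ballCenter F x n) (ballCenter F x (n + 1))
      ≤ dist s (ballCenter F x n) + dist s (ballCenter F x (n + 1)) := dist_triangle_left _ _ _
    _ ≤ 2 * (1 / 2) ^ n := by linarith [hs, hs']

theorem tendsto_ballCenter :
    Tendsto (ballCenter F x) atTop (𝓝 (limUnder atTop (ballCenter F x))) :=
  (cauchySeq_of_le_geometric (1 / 2) 2 (by norm_num)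
    (dist_ballCenter_succ_le hFc x)).tendsto_limUnder

theorem limUnder_ballCenter_le (t : S) : F x (limUnder atTop (ballCenter F x)) ≤ F x t := by
  choose s hs hmin using hasMinimizerIn_closedBall_ballCenter hFc x
  have hdist : Tendsto (fun n => dist (ballCenter F x n) (s n)) atTop (𝓝 0) :=
    squeeze_zero (fun _ => dist_nonneg) (fun n => mem_closedBall'.mp (hs n))
      (tendsto_pow_atTop_nhds_zero_of_lt_one (by norm_num) (by norm_num))
  have hs_tendsto := tendsto_of_tendsto_of_dist (tendsto_ballCenter hFc x) hdist
  exact le_of_tendsto' ((hFc x).continuousAt.tendsto.comp hs_tendsto) fun n => hmin n t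

omit hFc x

theorem exists_measurable_argmin [MeasurableSpace X] [MeasurableSpace S] [BorelSpace S]
    (hFm : ∀ s, Measurable (F · s)) (hFc : ∀ x, Continuous (F x)) :
    ∃ f : X → S, Measurable f ∧ ∀ x, F x (f x) = ⨅ s, F x s :=
  ⟨fun x => limUnder atTop (ballCenter F x),
    measurable_of_tendsto_metrizable (measurable_ballCenter hFm hFc)
      (tendsto_pi_nhds.mpr (tendsto_ballCenter hFc)),
    fun x => (ciInf_eq_of_forall_ge_of_forall_gt_exists_lt (limUnder_ballCenter_le hFc x)
      fun _ hw => ⟨_, hw⟩).symm⟩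

end MeasurableArgmin

instance {Q : Type*} [MetricSpace Q] [CompactSpace Q] [MeasurableSpace Q] [BorelSpace Q] :
    CompactSpace (LevyProkhorov (ProbabilityMeasure Q)) :=
  LevyProkhorov.probabilityMeasureHomeomorph.compactSpace

instance {Q : Type*} [MeasurableSpace Q] [Nonempty Q] :
    Nonempty (LevyProkhorov (ProbabilityMeasure Q)) :=
  ⟨.ofMeasure ⟨Measure.dirac (Classical.arbitrary Q), inferInstance⟩⟩

theorem exists_measurable_least_squares_estimator_general
    {Q : Type*} [MetricSpace Q] [CompactSpace Q]
    [Nonempty Q] [MeasurableSpace Q] [BorelSpace Q]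
    (m : ℕ) (n : Fin m → ℕ)
    (J : (i : Fin m) → (Fin (n i) → ℝ) → LevyProkhorov (ProbabilityMeasure Q) → ℝ)
    (hmeas : ∀ i (P : LevyProkhorov (ProbabilityMeasure Q)), Measurable fun y => J i y P)
    (hcont : ∀ i (y : Fin (n i) → ℝ), Continuous fun P => J i y P) :
    ∃ Phat : ((i : Fin m) → Fin (n i) → ℝ) → LevyProkhorov (ProbabilityMeasure Q),
      @Measurable _ _ _ (borel (LevyProkhorov (ProbabilityMeasure Q))) Phat ∧
      ∀ y : (i : Fin m) → Fin (n i) → ℝ,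
        (∑ i, J i (y i) (Phat y)) = ⨅ P : LevyProkhorov (ProbabilityMeasure Q),
          ∑ i, J i (y i) P := by
  let := borel (LevyProkhorov (ProbabilityMeasure Q))
  have : BorelSpace (LevyProkhorov (ProbabilityMeasure Q)) := ⟨rfl⟩
  exact exists_measurable_argmin
    (fun P => Finset.measurable_sum _ fun i _ => (hmeas i P).comp (measurable_pi_apply i))
    (fun y => continuous_finsetSum _ fun i _ => hcont i (y i))

/-- Existence of a measurable least-squares estimator: let `(Q,d)` be a compact separable
metric space and `P(Q)` its Borel probability measures with the Prohorov metric.  For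
`i = 1,…,m` let `J_i : ℝ^{n_i} × P(Q) → ℝ` be Borel measurable in the data for each fixed
measure and continuous in the measure for each fixed data vector.  Then there exists a Borel
measurable map `P̂` from `∏_{i=1}^m ℝ^{n_i}` into `P(Q)` such that for every data vector `y`,
`Σᵢ J_i(yᵢ; P̂(y)) = inf_{P ∈ P(Q)} Σᵢ J_i(yᵢ; P)`. -/
theorem exists_measurable_least_squares_estimator
    {Q : Type*} [MetricSpace Q] [CompactSpace Q] [TopologicalSpace.SeparableSpace Q]
    [Nonempty Q] [MeasurableSpace Q] [BorelSpace Q]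
    (m : ℕ) (n : Fin m → ℕ)
    (J : (i : Fin m) → (Fin (n i) → ℝ) → LevyProkhorov (ProbabilityMeasure Q) → ℝ)
    (hmeas : ∀ i (P : LevyProkhorov (ProbabilityMeasure Q)), Measurable fun y => J i y P)
    (hcont : ∀ i (y : Fin (n i) → ℝ), Continuous fun P => J i y P) :
    ∃ Phat : ((i : Fin m) → Fin (n i) → ℝ) → LevyProkhorov (ProbabilityMeasure Q),
      @Measurable _ _ _ (borel (LevyProkhorov (ProbabilityMeasure Q))) Phat ∧
      ∀ y : (i : Fin m) → Fin (n i) → ℝ,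
        (∑ i, J i (y i) (Phat y)) = ⨅ P : LevyProkhorov (ProbabilityMeasure Q),
          ∑ i, J i (y i) P :=
  exists_measurable_least_squares_estimator_general m n J hmeas hcont
end

section
/- Under setup S, for each fixed P ∈ P(Q) there exists an event A_P ∈ Σ_Ω with P_Ω(A_P) = 1 such that for every ω ∈ A_P, (1/(mn)) J_{n,m}(ω;P) → J_0(P) as n → ∞. -/
open MeasureTheory ProbabilityTheory Filter

/-- The sampling times `t_k^n = k T / n`, viewed as points of `[0,T]`. -/
noncomputable def sampleTime (T : ℝ) (hT : 0 < T) (n k : ℕ) : Set.Icc (0 : ℝ) T :=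
  Set.projIcc 0 T hT.le (k * T / n)

/-- The least-squares cost
`J_{n,m}(ω;P) = Σ_{i=1}^m Σ_{k=1}^n (Y_{k,i}^n(ω) − ȳ_i(P)(t_k^n))²`, where
`Y_{k,i}^n(ω) = ȳ_i(P₀)(t_k^n) + e_{k,i}(ω)`. -/
noncomputable def lsCost {Q : Type*} [MetricSpace Q] [MeasurableSpace Q] {Ω : Type*}
    (m : ℕ) (T : ℝ) (hT : 0 < T)
    (ybar : Fin m → LevyProkhorov (ProbabilityMeasure Q) → C(Set.Icc (0 : ℝ) T, ℝ))
    (P₀ : LevyProkhorov (ProbabilityMeasure Q))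
    (e : ℕ → Fin m → Ω → ℝ)
    (n : ℕ) (ω : Ω) (P : LevyProkhorov (ProbabilityMeasure Q)) : ℝ :=
  ∑ i : Fin m, ∑ k ∈ Finset.Icc 1 n,
    ((ybar i P₀ (sampleTime T hT n k) + e k i ω) - ybar i P (sampleTime T hT n k)) ^ 2

/-- The limiting cost
`J₀(P) = σ² + (1/m) Σ_{i=1}^m ∫_0^T (ȳ_i(P₀)(t) − ȳ_i(P)(t))² dμ(t)`. -/
noncomputable def limCost {Q : Type*} [MetricSpace Q] [MeasurableSpace Q]
    (m : ℕ) (T : ℝ)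
    (ybar : Fin m → LevyProkhorov (ProbabilityMeasure Q) → C(Set.Icc (0 : ℝ) T, ℝ))
    (P₀ : LevyProkhorov (ProbabilityMeasure Q))
    (σ : ℝ) (μ : Measure (Set.Icc (0 : ℝ) T))
    (P : LevyProkhorov (ProbabilityMeasure Q)) : ℝ :=
  σ ^ 2 + (1 / (m : ℝ)) * ∑ i : Fin m, ∫ t, (ybar i P₀ t - ybar i P t) ^ 2 ∂μ

open Topology Finset Asymptotics

/-!
Expanding the square, `(1/n) J_{n,m}` is an average over `i` of three normalized sums: the
sampled squares `(ȳ_i(P₀) - ȳ_i(P))²(t_k)`, which converge to the `μ`-integral by assumption;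
the squared errors `e_{k,i}²`, which converge to `σ²` by the strong law of large numbers; and the
cross terms `(ȳ_i(P₀) - ȳ_i(P))(t_k) e_{k,i}`. The cross terms are the delicate part, since
their weights depend on `n`. Split `{1, …, n}` into `p` consecutive blocks on which the
(uniformly continuous) weight is within `η` of a constant: each block then contributes a
difference of two partial sums of the errors, which is `o(n)` by the strong law, and the
remainder is at most `η ∑ |e_{k,i}| = O(n)`, again by the strong law.
-/

lemma sum_range_sum_Ioc_eq_sum_Ioc {M : Type*} [AddCommMonoid M] (G : ℕ → M) {c : ℕ → ℕ}
    (hc : Monotone c) (p : ℕ) :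
    ∑ j ∈ range p, ∑ k ∈ Ioc (c j) (c (j + 1)), G k = ∑ k ∈ Ioc (c 0) (c p), G k := by
  induction p with
  | zero => simp
  | succ p ih => rw [sum_range_succ, ih, sum_Ioc_consecutive _ (hc p.zero_le) (hc p.le_succ)]

lemma tendsto_apply_mul_div_div_zero {S : ℕ → ℝ}
    (hS : Tendsto (fun N : ℕ => S N / N) atTop (𝓝 0)) (hS0 : S 0 = 0) (j : ℕ) {p : ℕ} (hp : p ≠ 0) :
    Tendsto (fun n : ℕ => S (j * n / p) / n) atTop (𝓝 0) := by
  rcases j.eq_zero_or_pos with rfl | hj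
  · simp [hS0]
  have hSo : S =o[atTop] (fun N : ℕ => (N : ℝ)) :=
    (isLittleO_iff_tendsto fun N hN => by simp_all).2 hS
  have hφ : Tendsto (fun n => j * n / p) atTop atTop :=
    (Nat.tendsto_div_const_atTop hp).comp
      (tendsto_atTop_mono (fun n => Nat.le_mul_of_pos_left n hj) tendsto_id)
  have hφO : (fun n : ℕ => ((j * n / p : ℕ) : ℝ)) =O[atTop] (fun n : ℕ => (n : ℝ)) :=
    IsBigO.of_bound j (Eventually.of_forall fun n => by
      simp only [Real.norm_natCast]; exact_mod_cast (Nat.div_le_self _ _))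
  exact ((hSo.comp_tendsto hφ).trans_isBigO hφO).tendsto_div_nhds_zero

lemma abs_div_sub_div_le_of_mem_Ioc {j k n p : ℕ} (hp : p ≠ 0)
    (hk : k ∈ Ioc (j * n / p) ((j + 1) * n / p)) : |(k : ℝ) / n - j / p| ≤ 1 / p := by
  rw [mem_Ioc, Nat.div_lt_iff_lt_mul (Nat.pos_of_ne_zero hp),
    Nat.le_div_iff_mul_le (Nat.pos_of_ne_zero hp)] at hk
  have hn : n ≠ 0 := by rintro rfl; simp at hk; omega
  have hp' : (0 : ℝ) < p := by positivity
  have hn' : (0 : ℝ) < n := by positivity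
  have hlow : (j : ℝ) / p ≤ k / n := by
    rw [div_le_div_iff₀ hp' hn']; exact_mod_cast hk.1.le
  have hup : (k : ℝ) / n ≤ j / p + 1 / p := by
    rw [← add_div, div_le_div_iff₀ hn' hp']; exact_mod_cast hk.2
  rw [abs_le]
  constructor <;> linarith [one_div_pos.2 hp']

section WeightedAverage

variable {x : ℕ → ℝ}

lemma tendsto_sum_range_mul_sum_Ioc_div
    (hx : Tendsto (fun n : ℕ => (∑ k ∈ Ioc 0 n, x k) / n) atTop (𝓝 0)) (w : ℕ → ℝ) {p : ℕ}
    (hp : p ≠ 0) :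
    Tendsto (fun n : ℕ =>
      (∑ j ∈ range p, w j * ∑ k ∈ Ioc (j * n / p) ((j + 1) * n / p), x k) / n)
      atTop (𝓝 0) := by
  have hblock : ∀ j n, ∑ k ∈ Ioc (j * n / p) ((j + 1) * n / p), x k
      = ∑ k ∈ Ioc 0 ((j + 1) * n / p), x k - ∑ k ∈ Ioc 0 (j * n / p), x k := fun j n => by
    rw [eq_sub_iff_add_eq', sum_Ioc_consecutive _ (Nat.zero_le _)
      (Nat.div_le_div_right (Nat.mul_le_mul_right n j.le_succ))]
  have hS := fun j => tendsto_apply_mul_div_div_zero hx (by simp) j hp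
  have h := tendsto_finsetSum (range p) fun j _ => ((hS (j + 1)).sub (hS j)).const_mul (w j)
  simp only [sub_self, mul_zero, sum_const_zero] at h
  refine h.congr fun n => ?_
  rw [sum_div]
  exact sum_congr rfl fun j _ => by rw [hblock, mul_div_assoc, sub_div]

lemma abs_sum_mul_sub_sum_range_mul_sum_Ioc_le {F : ℝ → ℝ} {η : ℝ} {n p : ℕ} (hp : p ≠ 0)
    (hF : ∀ a b : ℝ, |a - b| ≤ 1 / p → |F a - F b| ≤ η) :
    |∑ k ∈ Ioc 0 n, F ((k : ℝ) / n) * x k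
      - ∑ j ∈ range p, F ((j : ℝ) / p) * ∑ k ∈ Ioc (j * n / p) ((j + 1) * n / p), x k|
      ≤ η * ∑ k ∈ Ioc 0 n, |x k| := by
  have hc : Monotone fun j => j * n / p := fun a b hab =>
    Nat.div_le_div_right (Nat.mul_le_mul_right n hab)
  have hblocks := fun G : ℕ → ℝ => sum_range_sum_Ioc_eq_sum_Ioc G hc p
  simp only [zero_mul, Nat.zero_div, Nat.mul_div_cancel_left n (Nat.pos_of_ne_zero hp)]
    at hblocks
  rw [← hblocks, ← hblocks, mul_sum, ← sum_sub_distrib]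
  calc _ ≤ ∑ j ∈ range p, ∑ k ∈ Ioc (j * n / p) ((j + 1) * n / p),
        |F (k / n) - F (j / p)| * |x k| := by
        refine (abs_sum_le_sum_abs _ _).trans (sum_le_sum fun j _ => ?_)
        simp only [mul_sum, ← sum_sub_distrib, ← sub_mul, ← abs_mul]
        exact abs_sum_le_sum_abs _ _
    _ ≤ ∑ j ∈ range p, ∑ k ∈ Ioc (j * n / p) ((j + 1) * n / p), η * |x k| :=
        sum_le_sum fun j _ => sum_le_sum fun k hk => mul_le_mul_of_nonneg_right
          (hF _ _ (abs_div_sub_div_le_of_mem_Ioc hp hk)) (abs_nonneg _)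
    _ = _ := by simp only [mul_sum]

theorem tendsto_sum_mul_div_zero_of_uniformContinuous {F : ℝ → ℝ} (hF : UniformContinuous F)
    (hx : Tendsto (fun n : ℕ => (∑ k ∈ Icc 1 n, x k) / n) atTop (𝓝 0)) {L : ℝ}
    (habs : Tendsto (fun n : ℕ => (∑ k ∈ Icc 1 n, |x k|) / n) atTop (𝓝 L)) :
    Tendsto (fun n : ℕ => (∑ k ∈ Icc 1 n, F ((k : ℝ) / n) * x k) / n) atTop (𝓝 0) := by
  have hI : ∀ n, Icc 1 n = Ioc 0 n := fun n => Icc_add_one_left_eq_Ioc 0 n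
  simp only [hI] at hx habs ⊢
  rw [Metric.tendsto_nhds]
  intro ε hε
  set η := ε / (2 * (|L| + 1))
  obtain ⟨δ, hδ, hFδ⟩ := Metric.uniformContinuous_iff.1 hF η (by positivity)
  obtain ⟨N, hN⟩ := exists_nat_one_div_lt hδ
  set p := N + 1
  have hp : p ≠ 0 := N.succ_ne_zero
  have hFp : ∀ a b : ℝ, |a - b| ≤ 1 / p → |F a - F b| ≤ η := fun a b hab =>
    (hFδ (hab.trans_lt (by exact_mod_cast hN))).le
  have hstep := Metric.tendsto_nhds.1
    (tendsto_sum_range_mul_sum_Ioc_div hx (fun j => F ((j : ℝ) / p)) hp) (ε / 2) (half_pos hε)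
  filter_upwards [hstep, habs.eventually_lt_const ((le_abs_self L).trans_lt (lt_add_one _))]
    with n hB habsn
  set A := ∑ k ∈ Ioc 0 n, F ((k : ℝ) / n) * x k
  set B := ∑ j ∈ range p, F ((j : ℝ) / p) * ∑ k ∈ Ioc (j * n / p) ((j + 1) * n / p), x k
  rw [Real.dist_eq, sub_zero] at hB ⊢
  have hη : η * (|L| + 1) = ε / 2 := by simp only [η]; field_simp
  calc |A / n| = |(A - B) / n + B / n| := by rw [sub_div, sub_add_cancel]
    _ ≤ |(A - B) / n| + |B / n| := abs_add_le _ _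
    _ = |A - B| / n + |B / n| := by rw [abs_div, Nat.abs_cast]
    _ ≤ η * ((∑ k ∈ Ioc 0 n, |x k|) / n) + |B / n| := by
        rw [← mul_div_assoc]
        gcongr
        exact abs_sum_mul_sub_sum_range_mul_sum_Ioc_le hp hFp
    _ < η * (|L| + 1) + ε / 2 := by gcongr
    _ = ε := by linarith

end WeightedAverage

lemma sum_range_succ_eq_sum_Icc {M : Type*} [AddCommMonoid M] (f : ℕ → M) (n : ℕ) :
    ∑ k ∈ range n, f (k + 1) = ∑ k ∈ Icc 1 n, f k := by
  rw [range_eq_Ico, sum_Ico_add', zero_add, Ico_add_one_right_eq_Icc]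

lemma exists_measurableSet_measure_eq_one_of_ae {α : Type*} [MeasurableSpace α] {μ : Measure α}
    [IsProbabilityMeasure μ] {p : α → Prop} (h : ∀ᵐ a ∂μ, p a) :
    ∃ A, MeasurableSet A ∧ μ A = 1 ∧ ∀ a ∈ A, p a :=
  ⟨(toMeasurable μ {a | ¬p a})ᶜ, (measurableSet_toMeasurable _ _).compl,
    (prob_compl_eq_one_iff (measurableSet_toMeasurable _ _)).2
      (by rw [measure_toMeasurable]; exact ae_iff.1 h),
    fun _ ha => not_not.1 fun hna => ha (subset_toMeasurable _ _ hna)⟩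

section StrongLaw

variable {Ω : Type*} [MeasurableSpace Ω] {μ : Measure Ω} {X : ℕ → Ω → ℝ}

theorem ae_tendsto_sum_Icc_div (hint : Integrable (X 0) μ)
    (hindep : Pairwise fun i j => IndepFun (X i) (X j) μ)
    (hident : ∀ i, IdentDistrib (X i) (X 0) μ μ) :
    ∀ᵐ ω ∂μ, Tendsto (fun n : ℕ => (∑ k ∈ Icc 1 n, X k ω) / n) atTop (𝓝 μ[X 0]) := by
  have h := strong_law_ae_real (fun k => X (k + 1)) ((hident 1).integrable_iff.2 hint)
    (fun i j hij => hindep (by simpa using hij)) fun i => (hident (i + 1)).trans (hident 1).symm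
  rw [(hident 1).integral_eq] at h
  filter_upwards [h] with ω hω
  simpa only [sum_range_succ_eq_sum_Icc fun k => X k ω] using hω

lemma tendsto_sum_add_sq_div {w : ℕ → ℕ → ℝ} {x : ℕ → ℝ} {a s : ℝ}
    (hw : Tendsto (fun n : ℕ => (∑ k ∈ Icc 1 n, w n k ^ 2) / n) atTop (𝓝 a))
    (hwx : Tendsto (fun n : ℕ => (∑ k ∈ Icc 1 n, w n k * x k) / n) atTop (𝓝 0))
    (hx : Tendsto (fun n : ℕ => (∑ k ∈ Icc 1 n, x k ^ 2) / n) atTop (𝓝 s)) :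
    Tendsto (fun n : ℕ => (∑ k ∈ Icc 1 n, (w n k + x k) ^ 2) / n) atTop (𝓝 (a + s)) := by
  have h := (hw.add (hwx.const_mul 2)).add hx
  rw [mul_zero, add_zero] at h
  refine h.congr fun n => ?_
  simp only [add_sq, sum_add_distrib, ← mul_sum, add_div, mul_div_assoc, mul_assoc]

theorem ae_tendsto_sum_add_sq_div [IsFiniteMeasure μ] {F : ℝ → ℝ} (hF : UniformContinuous F)
    {a : ℝ} (hFa : Tendsto (fun n : ℕ => (∑ k ∈ Icc 1 n, F ((k : ℝ) / n) ^ 2) / n) atTop (𝓝 a))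
    (hL2 : MemLp (X 0) 2 μ) (hindep : Pairwise fun i j => IndepFun (X i) (X j) μ)
    (hident : ∀ i, IdentDistrib (X i) (X 0) μ μ) (hmean : μ[X 0] = 0) :
    ∀ᵐ ω ∂μ, Tendsto (fun n : ℕ => (∑ k ∈ Icc 1 n, (F ((k : ℝ) / n) + X k ω) ^ 2) / n) atTop
      (𝓝 (a + variance (X 0) μ)) := by
  have hsum := ae_tendsto_sum_Icc_div (hL2.integrable one_le_two) hindep hident
  have habs := ae_tendsto_sum_Icc_div (X := fun k ω => |X k ω|) (hL2.integrable one_le_two).abs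
    (fun i j hij => (hindep hij).comp measurable_abs measurable_abs)
    fun i => (hident i).comp measurable_abs
  have hsq := ae_tendsto_sum_Icc_div (X := fun k ω => X k ω ^ 2) hL2.integrable_sq
    (fun i j hij => (hindep hij).comp (measurable_id.pow_const 2) (measurable_id.pow_const 2))
    fun i => (hident i).comp (measurable_id.pow_const 2)
  rw [hmean] at hsum
  rw [variance_of_integral_eq_zero hL2.aestronglyMeasurable.aemeasurable hmean]
  filter_upwards [hsum, habs, hsq] with ω hsum habs hsq
  exact tendsto_sum_add_sq_div hFa
    (tendsto_sum_mul_div_zero_of_uniformContinuous hF hsum habs) hsq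

end StrongLaw

lemma sampleTime_eq_projIcc (T : ℝ) (hT : 0 < T) (n k : ℕ) :
    sampleTime T hT n k = Set.projIcc 0 T hT.le ((k : ℝ) / n * T) := by
  rw [sampleTime, div_mul_eq_mul_div]

lemma uniformContinuous_comp_projIcc_mul {β : Type*} [UniformSpace β] {T : ℝ} (hT : 0 ≤ T)
    (f : C(Set.Icc (0 : ℝ) T, β)) :
    UniformContinuous fun s : ℝ => f (Set.projIcc 0 T hT (s * T)) :=
  (CompactSpace.uniformContinuous_of_continuous f.continuous).comp
    ((LipschitzWith.projIcc hT).uniformContinuous.comp (uniformContinuous_mul_right' T))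

theorem normalized_cost_tendsto_ae_general
    {Q : Type*} [MetricSpace Q]
    [MeasurableSpace Q]
    {Ω : Type*} [MeasurableSpace Ω] (Pr : Measure Ω) [IsProbabilityMeasure Pr]
    (m : ℕ) (hm : 0 < m) (T : ℝ) (hT : 0 < T)
    (e : ℕ → Fin m → Ω → ℝ) (σ : ℝ)
    (hindep : iIndepFun (fun p : ℕ × Fin m => e p.1 p.2) Pr)
    (hident : ∀ k i k' i', IdentDistrib (e k i) (e k' i') Pr Pr)
    (hL2 : ∀ k i, MemLp (e k i) 2 Pr)
    (hmean : ∀ k i, ∫ ω, e k i ω ∂Pr = 0)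
    (hvar : ∀ k i, variance (e k i) Pr = σ ^ 2)
    (ybar : Fin m → LevyProkhorov (ProbabilityMeasure Q) → C(Set.Icc (0 : ℝ) T, ℝ))
    (μ : Measure (Set.Icc (0 : ℝ) T))
    (hμ : ∀ f : C(Set.Icc (0 : ℝ) T, ℝ),
      Tendsto (fun n : ℕ => (1 / (n : ℝ)) * ∑ k ∈ Finset.Icc 1 n, f (sampleTime T hT n k))
        atTop (nhds (∫ t, f t ∂μ)))
    (P₀ : LevyProkhorov (ProbabilityMeasure Q))
    (P : LevyProkhorov (ProbabilityMeasure Q)) :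
    ∃ A : Set Ω, MeasurableSet A ∧ Pr A = 1 ∧ ∀ ω ∈ A,
      Tendsto (fun n : ℕ => (1 / ((m : ℝ) * n)) * lsCost m T hT ybar P₀ e n ω P)
        atTop (nhds (limCost m T ybar P₀ σ μ P)) := by
  have hcoord : ∀ i, ∀ᵐ ω ∂Pr, Tendsto (fun n : ℕ => (∑ k ∈ Icc 1 n,
      ((ybar i P₀ (sampleTime T hT n k) + e k i ω) - ybar i P (sampleTime T hT n k)) ^ 2) / n)
      atTop (𝓝 (∫ t, (ybar i P₀ t - ybar i P t) ^ 2 ∂μ + σ ^ 2)) := by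
    intro i
    have hg := hμ ((ybar i P₀ - ybar i P) ^ 2)
    simp only [sampleTime_eq_projIcc, ContinuousMap.pow_apply, one_div_mul_eq_div] at hg
    have h := ae_tendsto_sum_add_sq_div
      (uniformContinuous_comp_projIcc_mul hT.le (ybar i P₀ - ybar i P)) hg (hL2 0 i)
      (fun k k' hkk' => hindep.indepFun (by simpa using hkk' : (k, i) ≠ (k', i)))
      (fun k => hident k i 0 i) (hmean 0 i)
    rw [hvar 0 i] at h
    filter_upwards [h] with ω hω
    simpa only [sampleTime_eq_projIcc, add_sub_right_comm, ContinuousMap.sub_apply] using hω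
  obtain ⟨A, hA, hA1, hAω⟩ := exists_measurableSet_measure_eq_one_of_ae (ae_all_iff.2 hcoord)
  refine ⟨A, hA, hA1, fun ω hω => ?_⟩
  have hm' : (m : ℝ) ≠ 0 := by positivity
  convert (tendsto_finsetSum univ fun i _ => hAω ω hω i).const_mul (1 / (m : ℝ)) using 2
  · rw [lsCost, ← sum_div]
    ring
  · rw [limCost, sum_add_distrib, sum_const, card_univ, Fintype.card_fin, nsmul_eq_mul]
    field_simp
    ring

/-- Under setup S, for each fixed probability measure `P` on `Q` there is an almost-sure
event on which `(1/(mn)) J_{n,m}(ω;P) → J₀(P)` as `n → ∞`. -/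
theorem normalized_cost_tendsto_ae
    {Q : Type*} [MetricSpace Q] [CompactSpace Q] [TopologicalSpace.SeparableSpace Q]
    [MeasurableSpace Q] [BorelSpace Q]
    {Ω : Type*} [MeasurableSpace Ω] (Pr : Measure Ω) [IsProbabilityMeasure Pr]
    (m : ℕ) (hm : 0 < m) (T : ℝ) (hT : 0 < T)
    (e : ℕ → Fin m → Ω → ℝ) (σ : ℝ)
    (hmeas : ∀ k i, Measurable (e k i))
    (hindep : iIndepFun (fun p : ℕ × Fin m => e p.1 p.2) Pr)
    (hident : ∀ k i k' i', IdentDistrib (e k i) (e k' i') Pr Pr)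
    (hL2 : ∀ k i, MemLp (e k i) 2 Pr)
    (hmean : ∀ k i, ∫ ω, e k i ω ∂Pr = 0)
    (hvar : ∀ k i, variance (e k i) Pr = σ ^ 2)
    (ybar : Fin m → LevyProkhorov (ProbabilityMeasure Q) → C(Set.Icc (0 : ℝ) T, ℝ))
    (hybar : ∀ i, Continuous (ybar i))
    (μ : Measure (Set.Icc (0 : ℝ) T)) [IsFiniteMeasure μ]
    (hμ : ∀ f : C(Set.Icc (0 : ℝ) T, ℝ),
      Tendsto (fun n : ℕ => (1 / (n : ℝ)) * ∑ k ∈ Finset.Icc 1 n, f (sampleTime T hT n k))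
        atTop (nhds (∫ t, f t ∂μ)))
    (P₀ : LevyProkhorov (ProbabilityMeasure Q))
    (P : LevyProkhorov (ProbabilityMeasure Q)) :
    ∃ A : Set Ω, MeasurableSet A ∧ Pr A = 1 ∧ ∀ ω ∈ A,
      Tendsto (fun n : ℕ => (1 / ((m : ℝ) * n)) * lsCost m T hT ybar P₀ e n ω P)
        atTop (nhds (limCost m T ybar P₀ σ μ P)) :=
  normalized_cost_tendsto_ae_general Pr m hm T hT e σ hindep hident hL2 hmean hvar ybar μ hμ P₀ P
end

section
/- Under setup S, there exists an event A ∈ Σ_Ω with P_Ω(A) = 1 such that for every ω ∈ A the following equicontinuity holds: for every ε > 0 and every P ∈ P(Q) there exist δ > 0 and N_0 ∈ ℕ such that for all n ≥ N_0 and all P̃ ∈ P(Q) with ρ(P,P̃) < δ, one has |(1/(mn)) J_{n,m}(ω;P) − (1/(mn)) J_{n,m}(ω;P̃)| < ε. -/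
/-!
By the strong law of large numbers applied to `|e_{k,i}|`, almost surely every average
`(1/n) Σ_k |e_{k,i}(ω)|` stays bounded. Fix such an `ω` and write `r_k` for the residuals at `P`
and `d_i = ‖ȳ_i(P) − ȳ_i(P')‖`. Since `u² − v² = (u − v)(u + v)` and the residuals at `P` and
`P'` differ by at most `d_i`, we get `|J(P) − J(P')| ≤ Σ_i d_i (2 Σ_k |r_k| + n d_i)`. After
dividing by `mn`, the bound on the averages makes the right side, for all large `n`, at most a
continuous function of `P'` that vanishes at `P`.
-/

open MeasureTheory ProbabilityTheory Filter

open Finset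

section StrongLaw

variable {Ω : Type*} [MeasurableSpace Ω] {μ : Measure Ω}

theorem ae_isBoundedUnder_cesaro_abs {X : ℕ → Ω → ℝ} (hint : Integrable (X 0) μ)
    (hindep : Pairwise fun j k => IndepFun (X j) (X k) μ)
    (hident : ∀ k, IdentDistrib (X k) (X 0) μ μ) :
    ∀ᵐ ω ∂μ, IsBoundedUnder (· ≤ ·) atTop (fun n : ℕ => (∑ k ∈ range n, |X k ω|) / n) := by
  have hindep_abs : Pairwise fun j k => IndepFun (fun ω => |X j ω|) (fun ω => |X k ω|) μ :=
    fun j k hjk => (hindep hjk).comp measurable_abs measurable_abs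
  filter_upwards [strong_law_ae_real (fun k ω => |X k ω|) hint.abs hindep_abs
    fun k => (hident k).comp measurable_abs] with ω hω
  exact hω.isBoundedUnder_le

theorem ae_forall_isBoundedUnder_cesaro_abs {ι : Type*} [Countable ι] {e : ℕ → ι → Ω → ℝ}
    (hint : ∀ k i, Integrable (e k i) μ)
    (hindep : iIndepFun (fun p : ℕ × ι => e p.1 p.2) μ)
    (hident : ∀ k k' i, IdentDistrib (e k i) (e k' i) μ μ) :
    ∀ᵐ ω ∂μ, ∀ i,
      IsBoundedUnder (· ≤ ·) atTop (fun n : ℕ => (∑ k ∈ Icc 1 n, |e k i ω|) / n) := by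
  rw [ae_all_iff]
  intro i
  have hshift : ∀ ω n, ∑ k ∈ Icc 1 n, |e k i ω| = ∑ k ∈ range n, |e (k + 1) i ω| := by
    intro ω n
    rw [← Ico_add_one_right_eq_Icc, sum_Ico_eq_sum_range, add_tsub_cancel_right]
    simp only [add_comm 1]
  have hindep_shift : Pairwise fun j k => IndepFun (e (j + 1) i) (e (k + 1) i) μ := fun j k hjk =>
    hindep.indepFun (i := (j + 1, i)) (j := (k + 1, i)) (by simpa using hjk)
  simpa only [hshift] using ae_isBoundedUnder_cesaro_abs (hint 1 i) hindep_shift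
    fun k => hident (k + 1) 1 i

end StrongLaw

theorem abs_sq_sub_sq_le (u v : ℝ) : |u ^ 2 - v ^ 2| ≤ |u - v| * (2 * |u| + |u - v|) := by
  have hsum : |u + v| ≤ 2 * |u| + |u - v| := by
    calc |u + v| = |2 * u - (u - v)| := by ring_nf
      _ ≤ |2 * u| + |u - v| := abs_sub _ _
      _ = 2 * |u| + |u - v| := by rw [abs_mul, abs_two]
  rw [sq_sub_sq, abs_mul, mul_comm]
  exact mul_le_mul_of_nonneg_left hsum (abs_nonneg _)

theorem exists_forall_ge_forall_dist_lt_abs_sub_lt {X : Type*} [PseudoMetricSpace X]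
    {F : ℕ → X → ℝ} {g : X → ℝ} {x : X} (hg : ContinuousAt g x) (hgx : g x = 0)
    (hF : ∀ᶠ n in atTop, ∀ y, |F n x - F n y| ≤ g y) :
    ∀ ε > 0, ∃ δ > 0, ∃ N : ℕ, ∀ n ≥ N, ∀ y, dist x y < δ → |F n x - F n y| < ε := by
  intro ε hε
  obtain ⟨δ, hδ, hgδ⟩ := Metric.eventually_nhds_iff.1 (hg.eventually (gt_mem_nhds (hgx ▸ hε)))
  obtain ⟨N, hN⟩ := eventually_atTop.1 hF
  exact ⟨δ, hδ, N, fun n hn y hy => (hN n hn y).trans_lt (hgδ (by rwa [dist_comm]))⟩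

section LeastSquares

variable {X Ω : Type*} {m : ℕ} {T : ℝ} {hT : 0 < T} {ybar : Fin m → X → C(Set.Icc (0 : ℝ) T, ℝ)}
  {P₀ : X} {e : ℕ → Fin m → Ω → ℝ} {n : ℕ} {ω : Ω}

variable (T hT ybar P₀ e n ω) in
/-- The residual `Y_{k,i}^n(ω) − ȳ_i(P)(t_k^n)` of the least-squares fit. -/
noncomputable def lsResidual (P : X) (i : Fin m) (k : ℕ) : ℝ :=
  ybar i P₀ (sampleTime T hT n k) + e k i ω - ybar i P (sampleTime T hT n k)

theorem lsCost_eq_sum_sq_lsResidual {Q : Type*} [MetricSpace Q] [MeasurableSpace Q]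
    {ybar : Fin m → LevyProkhorov (ProbabilityMeasure Q) → C(Set.Icc (0 : ℝ) T, ℝ)}
    {P₀ : LevyProkhorov (ProbabilityMeasure Q)} (P : LevyProkhorov (ProbabilityMeasure Q)) :
    lsCost m T hT ybar P₀ e n ω P =
      ∑ i, ∑ k ∈ Icc 1 n, lsResidual T hT ybar P₀ e n ω P i k ^ 2 :=
  rfl

theorem abs_lsResidual_le (P : X) (i : Fin m) (k : ℕ) :
    |lsResidual T hT ybar P₀ e n ω P i k| ≤ ‖ybar i P₀‖ + ‖ybar i P‖ + |e k i ω| := by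
  have h₀ := (ybar i P₀).norm_coe_le_norm (sampleTime T hT n k)
  have h := (ybar i P).norm_coe_le_norm (sampleTime T hT n k)
  rw [Real.norm_eq_abs] at h₀ h
  unfold lsResidual
  calc _ ≤ |ybar i P₀ (sampleTime T hT n k) + e k i ω| + |ybar i P (sampleTime T hT n k)| :=
        abs_sub _ _
    _ ≤ _ := by linarith [abs_add_le (ybar i P₀ (sampleTime T hT n k)) (e k i ω)]

theorem abs_lsResidual_sub_le (P P' : X) (i : Fin m) (k : ℕ) :
    |lsResidual T hT ybar P₀ e n ω P i k - lsResidual T hT ybar P₀ e n ω P' i k| ≤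
      dist (ybar i P) (ybar i P') := by
  have h := (ybar i P).dist_apply_le_dist (g := ybar i P') (sampleTime T hT n k)
  rw [Real.dist_eq] at h
  unfold lsResidual
  rwa [abs_sub_comm, sub_sub_sub_cancel_left]

theorem sum_abs_lsResidual_le (P : X) (i : Fin m) :
    ∑ k ∈ Icc 1 n, |lsResidual T hT ybar P₀ e n ω P i k| ≤
      n * (‖ybar i P₀‖ + ‖ybar i P‖) + ∑ k ∈ Icc 1 n, |e k i ω| := by
  calc _ ≤ ∑ k ∈ Icc 1 n, (‖ybar i P₀‖ + ‖ybar i P‖ + |e k i ω|) :=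
        sum_le_sum fun k _ => abs_lsResidual_le P i k
    _ = _ := by rw [sum_add_distrib, sum_const, Nat.card_Icc, add_tsub_cancel_right, nsmul_eq_mul]

theorem abs_lsCost_sub_le {Q : Type*} [MetricSpace Q] [MeasurableSpace Q]
    {ybar : Fin m → LevyProkhorov (ProbabilityMeasure Q) → C(Set.Icc (0 : ℝ) T, ℝ)}
    {P₀ : LevyProkhorov (ProbabilityMeasure Q)} (P P' : LevyProkhorov (ProbabilityMeasure Q)) :
    |lsCost m T hT ybar P₀ e n ω P - lsCost m T hT ybar P₀ e n ω P'| ≤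
      ∑ i, dist (ybar i P) (ybar i P') *
        (2 * ∑ k ∈ Icc 1 n, |lsResidual T hT ybar P₀ e n ω P i k| +
          n * dist (ybar i P) (ybar i P')) := by
  rw [lsCost_eq_sum_sq_lsResidual, lsCost_eq_sum_sq_lsResidual, ← sum_sub_distrib]
  refine (abs_sum_le_sum_abs _ _).trans (sum_le_sum fun i _ => ?_)
  set d := dist (ybar i P) (ybar i P')
  rw [← sum_sub_distrib]
  calc |∑ k ∈ Icc 1 n, _|
        ≤ ∑ k ∈ Icc 1 n, d * (2 * |lsResidual T hT ybar P₀ e n ω P i k| + d) := by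
        refine (abs_sum_le_sum_abs _ _).trans (sum_le_sum fun k _ => ?_)
        have hk : |lsResidual T hT ybar P₀ e n ω P i k - lsResidual T hT ybar P₀ e n ω P' i k|
            ≤ d := abs_lsResidual_sub_le P P' i k
        refine (abs_sq_sub_sq_le _ _).trans ?_
        gcongr
    _ = _ := by
        rw [← mul_sum, sum_add_distrib, ← mul_sum, sum_const, Nat.card_Icc, add_tsub_cancel_right,
          nsmul_eq_mul]

end LeastSquares

theorem normalized_lsCost_equicontinuous {Q : Type*} [MetricSpace Q] [MeasurableSpace Q]
    [OpensMeasurableSpace Q] {Ω : Type*} {m : ℕ} {T : ℝ} {hT : 0 < T}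
    {ybar : Fin m → LevyProkhorov (ProbabilityMeasure Q) → C(Set.Icc (0 : ℝ) T, ℝ)}
    {P₀ : LevyProkhorov (ProbabilityMeasure Q)} {e : ℕ → Fin m → Ω → ℝ} {ω : Ω}
    (hybar : ∀ i, Continuous (ybar i))
    (he : ∀ i, IsBoundedUnder (· ≤ ·) atTop (fun n : ℕ => (∑ k ∈ Icc 1 n, |e k i ω|) / n)) :
    ∀ ε > (0 : ℝ), ∀ P : LevyProkhorov (ProbabilityMeasure Q),
      ∃ δ > (0 : ℝ), ∃ N₀ : ℕ, ∀ n ≥ N₀, ∀ P' : LevyProkhorov (ProbabilityMeasure Q),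
        dist P P' < δ →
          |(1 / ((m : ℝ) * n)) * lsCost m T hT ybar P₀ e n ω P
            - (1 / ((m : ℝ) * n)) * lsCost m T hT ybar P₀ e n ω P'| < ε := by
  intro ε hε P
  choose C hC using he
  set R : Fin m → ℝ := fun i => ‖ybar i P₀‖ + ‖ybar i P‖ + C i
  set d : Fin m → LevyProkhorov (ProbabilityMeasure Q) → ℝ :=
    fun i P' => dist (ybar i P) (ybar i P')
  refine exists_forall_ge_forall_dist_lt_abs_sub_lt (x := P)
    (F := fun n P' => 1 / ((m : ℝ) * n) * lsCost m T hT ybar P₀ e n ω P')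
    (g := fun P' => 1 / (m : ℝ) * ∑ i, d i P' * (2 * R i + d i P'))
    (Continuous.continuousAt (by fun_prop)) (by simp [d]) ?_ ε hε
  filter_upwards [eventually_all.2 hC, eventually_ge_atTop 1] with n hCn hn P'
  have hn₀ : (0 : ℝ) < n := by exact_mod_cast hn
  have hres : ∀ i, (∑ k ∈ Icc 1 n, |lsResidual T hT ybar P₀ e n ω P i k|) / n ≤ R i := by
    intro i
    calc _ ≤ (n * (‖ybar i P₀‖ + ‖ybar i P‖) + ∑ k ∈ Icc 1 n, |e k i ω|) / n := by
          gcongr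
          exact sum_abs_lsResidual_le P i
      _ = ‖ybar i P₀‖ + ‖ybar i P‖ + (∑ k ∈ Icc 1 n, |e k i ω|) / n := by field_simp
      _ ≤ R i := add_le_add_right (hCn i) _
  calc _ = 1 / ((m : ℝ) * n) *
          |lsCost m T hT ybar P₀ e n ω P - lsCost m T hT ybar P₀ e n ω P'| := by
        rw [← mul_sub, abs_mul, abs_of_nonneg (by positivity)]
    _ ≤ 1 / ((m : ℝ) * n) * ∑ i, d i P' *
          (2 * ∑ k ∈ Icc 1 n, |lsResidual T hT ybar P₀ e n ω P i k| + n * d i P') := by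
        gcongr
        exact abs_lsCost_sub_le P P'
    _ = 1 / (m : ℝ) * ∑ i, d i P' *
          (2 * ((∑ k ∈ Icc 1 n, |lsResidual T hT ybar P₀ e n ω P i k|) / n) + d i P') := by
        rw [mul_sum, mul_sum]
        refine sum_congr rfl fun i _ => ?_
        field_simp
    _ ≤ _ := by
        gcongr with i
        exact hres i

theorem normalized_cost_equicontinuous_ae_general
    {Q : Type*} [MetricSpace Q]
    [MeasurableSpace Q] [BorelSpace Q]
    {Ω : Type*} [MeasurableSpace Ω] (Pr : Measure Ω) [IsProbabilityMeasure Pr]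
    (m : ℕ) (T : ℝ) (hT : 0 < T)
    (e : ℕ → Fin m → Ω → ℝ)
    (hindep : iIndepFun (fun p : ℕ × Fin m => e p.1 p.2) Pr)
    (hident : ∀ k i k' i', IdentDistrib (e k i) (e k' i') Pr Pr)
    (hL2 : ∀ k i, MemLp (e k i) 2 Pr)
    (ybar : Fin m → LevyProkhorov (ProbabilityMeasure Q) → C(Set.Icc (0 : ℝ) T, ℝ))
    (hybar : ∀ i, Continuous (ybar i))
    (P₀ : LevyProkhorov (ProbabilityMeasure Q))
    :
    ∃ A : Set Ω, MeasurableSet A ∧ Pr A = 1 ∧ ∀ ω ∈ A,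
      ∀ ε > (0 : ℝ), ∀ P : LevyProkhorov (ProbabilityMeasure Q),
        ∃ δ > (0 : ℝ), ∃ N₀ : ℕ, ∀ n ≥ N₀, ∀ P' : LevyProkhorov (ProbabilityMeasure Q),
          dist P P' < δ →
            |(1 / ((m : ℝ) * n)) * lsCost m T hT ybar P₀ e n ω P
              - (1 / ((m : ℝ) * n)) * lsCost m T hT ybar P₀ e n ω P'| < ε := by
  have hbounded := ae_forall_isBoundedUnder_cesaro_abs
    (fun k i => (hL2 k i).integrable one_le_two) hindep fun k k' i => hident k i k' i
  obtain ⟨A, hA, hA_meas, hA_bounded⟩ := hbounded.exists_measurable_mem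
  exact ⟨A, hA_meas, (mem_ae_iff_prob_eq_one hA_meas).1 hA,
    fun ω hω => normalized_lsCost_equicontinuous hybar (hA_bounded ω hω)⟩

/-- Under setup S, there is an almost-sure event on which the family of normalized costs
`P ↦ (1/(mn)) J_{n,m}(ω;P)`, `n ∈ ℕ`, is equicontinuous in the sense that for every `ε > 0`
and every `P` there are `δ > 0` and `N₀` such that for all `n ≥ N₀` and all `P'` with
`ρ(P,P') < δ` the normalized costs at `P` and `P'` differ by less than `ε`. -/
theorem normalized_cost_equicontinuous_ae
    {Q : Type*} [MetricSpace Q] [CompactSpace Q] [TopologicalSpace.SeparableSpace Q]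
    [MeasurableSpace Q] [BorelSpace Q]
    {Ω : Type*} [MeasurableSpace Ω] (Pr : Measure Ω) [IsProbabilityMeasure Pr]
    (m : ℕ) (hm : 0 < m) (T : ℝ) (hT : 0 < T)
    (e : ℕ → Fin m → Ω → ℝ) (σ : ℝ)
    (hmeas : ∀ k i, Measurable (e k i))
    (hindep : iIndepFun (fun p : ℕ × Fin m => e p.1 p.2) Pr)
    (hident : ∀ k i k' i', IdentDistrib (e k i) (e k' i') Pr Pr)
    (hL2 : ∀ k i, MemLp (e k i) 2 Pr)
    (hmean : ∀ k i, ∫ ω, e k i ω ∂Pr = 0)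
    (hvar : ∀ k i, variance (e k i) Pr = σ ^ 2)
    (ybar : Fin m → LevyProkhorov (ProbabilityMeasure Q) → C(Set.Icc (0 : ℝ) T, ℝ))
    (hybar : ∀ i, Continuous (ybar i))
    (μ : Measure (Set.Icc (0 : ℝ) T)) [IsFiniteMeasure μ]
    (hμ : ∀ f : C(Set.Icc (0 : ℝ) T, ℝ),
      Tendsto (fun n : ℕ => (1 / (n : ℝ)) * ∑ k ∈ Finset.Icc 1 n, f (sampleTime T hT n k))
        atTop (nhds (∫ t, f t ∂μ)))
    (P₀ : LevyProkhorov (ProbabilityMeasure Q))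
    :
    ∃ A : Set Ω, MeasurableSet A ∧ Pr A = 1 ∧ ∀ ω ∈ A,
      ∀ ε > (0 : ℝ), ∀ P : LevyProkhorov (ProbabilityMeasure Q),
        ∃ δ > (0 : ℝ), ∃ N₀ : ℕ, ∀ n ≥ N₀, ∀ P' : LevyProkhorov (ProbabilityMeasure Q),
          dist P P' < δ →
            |(1 / ((m : ℝ) * n)) * lsCost m T hT ybar P₀ e n ω P
              - (1 / ((m : ℝ) * n)) * lsCost m T hT ybar P₀ e n ω P'| < ε :=
  normalized_cost_equicontinuous_ae_general Pr m T hT e hindep hident hL2 ybar hybar P₀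
end

section
/- Let (Q,d) be a compact separable metric space, P(Q) the Borel probability measures on Q with the Prohorov metric ρ, and (q_j)_{j∈ℕ} a dense sequence in Q. For M ∈ ℕ let P_M(Q) = {Σ_{j=1}^M p_j δ_{q_j} : p_j ∈ [0,1], Σ_{j=1}^M p_j = 1}, where δ_q is the Dirac measure at q. Fix n, m ∈ ℕ and real data 𝓎_{k,i}, k = 1,…,n, i = 1,…,m, and suppose given functions ȳ_{k,i} : P(Q) → ℝ and ȳ^N_{k,i} : P(Q) → ℝ, N ∈ ℕ, satisfying: (B1) for every N the map P ↦ J^N(P) := Σ_{i=1}^m Σ_{k=1}^n (𝓎_{k,i} − ȳ^N_{k,i}(P))² is continuous on (P(Q),ρ); (B2) for every P ∈ P(Q) and every sequence (P_M) in P(Q) with ρ(P_M,P) → 0, one has ȳ^N_{k,i}(P_M) → ȳ_{k,i}(P) as N,M → ∞ jointly, for all k,i; (B3) there is a constant C such that |ȳ_{k,i}(P)| ≤ C and |ȳ^N_{k,i}(P)| ≤ C for all N, P, k, i. Define J(P) = Σ_{i=1}^m Σ_{k=1}^n (𝓎_{k,i} − ȳ_{k,i}(P))². Then: (i) for every N and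 M there exists P̂^N_M ∈ P_M(Q) minimizing J^N over P_M(Q); and (ii) for any sequences N_l → ∞ and M_l → ∞, the sequence (P̂^{N_l}_{M_l}) has a subsequence converging in the Prohorov metric to some P* ∈ P(Q), and any such limit satisfies J(P*) = inf_{P ∈ P(Q)} J(P). -/
/-!
On a compact metric space the Prokhorov space `P(Q)` is compact, and each `P_M(Q)` is the
continuous image of the standard simplex, hence compact; this gives the minimizers of the
continuous costs `J^N` and the convergent subsequences. For optimality of a limit `P*` against
an arbitrary `P'`, approximate `P'` by `P'_l ∈ P_{M_l}(Q)`: assigning to `q_j` the mass of the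
`j`-th cell of a partition subordinate to a cover by `r`-balls around `q_0, …, q_{M-1}` gives a
measure within Prokhorov distance `r` of `P'`. Then `J^{N_l}(P̂_l) ≤ J^{N_l}(P'_l)`, and (B2)
passes to the limit on both sides.
-/

open MeasureTheory Filter

/-- `PMset qd M` is the set of probability measures on `Q` that are convex combinations
`Σ_{j=1}^M p_j δ_{q_j}` of the Dirac measures at the first `M` points of the sequence `qd`. -/
def PMset {Q : Type*} [MetricSpace Q] [MeasurableSpace Q] (qd : ℕ → Q) (M : ℕ) :
    Set (LevyProkhorov (ProbabilityMeasure Q)) :=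
  {P | ∃ p : Fin M → ℝ, (∀ j, 0 ≤ p j ∧ p j ≤ 1) ∧ (∑ j, p j = 1) ∧
    P.toMeasure = ∑ j : Fin M, ENNReal.ofReal (p j) • Measure.dirac (qd j)}

open Set Metric Topology Function

section DiracCombination

variable {Q ι : Type*} [MeasurableSpace Q] [Fintype ι]

noncomputable def diracCombination (x : ι → Q) (p : ι → ℝ) : Measure Q :=
  ∑ i, ENNReal.ofReal (p i) • Measure.dirac (x i)

open Classical in
lemma diracCombination_apply (x : ι → Q) (p : ι → ℝ) {B : Set Q} (hB : MeasurableSet B) :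
    diracCombination x p B = ∑ i with x i ∈ B, ENNReal.ofReal (p i) := by
  simp [diracCombination, Measure.finsetSum_apply, Measure.dirac_apply' _ hB, Finset.sum_filter,
    Set.indicator_apply]

lemma lintegral_diracCombination (x : ι → Q) (p : ι → ℝ) {f : Q → ENNReal} (hf : Measurable f) :
    ∫⁻ q, f q ∂diracCombination x p = ∑ i, ENNReal.ofReal (p i) * f (x i) := by
  simp [diracCombination, lintegral_finsetSum_measure, lintegral_dirac' _ hf]

lemma isProbabilityMeasure_diracCombination (x : ι → Q) {p : ι → ℝ}
    (hp : p ∈ stdSimplex ℝ ι) : IsProbabilityMeasure (diracCombination x p) := by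
  constructor
  rw [diracCombination_apply x p MeasurableSet.univ]
  simp only [mem_univ, Finset.filter_true]
  rw [← ENNReal.ofReal_sum_of_nonneg fun i _ => hp.1 i, hp.2, ENNReal.ofReal_one]

noncomputable def simplexProbabilityMeasure (x : ι → Q) (p : stdSimplex ℝ ι) :
    ProbabilityMeasure Q :=
  ⟨diracCombination x p, isProbabilityMeasure_diracCombination x p.2⟩

lemma continuous_simplexProbabilityMeasure [TopologicalSpace Q] [OpensMeasurableSpace Q]
    (x : ι → Q) : Continuous (simplexProbabilityMeasure x) := by
  refine ProbabilityMeasure.continuous_iff_forall_continuous_lintegral.2 fun f => ?_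
  simp only [simplexProbabilityMeasure, ProbabilityMeasure.coe_mk,
    lintegral_diracCombination x _ f.continuous.measurable.coe_nnreal_ennreal]
  refine continuous_finsetSum _ fun i _ => ?_
  exact (ENNReal.continuous_mul_const ENNReal.coe_ne_top).comp
    (ENNReal.continuous_ofReal.comp ((continuous_apply i).comp continuous_subtype_val))

lemma toReal_measure_mem_stdSimplex (μ : Measure Q) [IsProbabilityMeasure μ] {A : ι → Set Q}
    (hA : ∀ i, MeasurableSet (A i)) (hdisj : Pairwise (Disjoint on A)) (hcover : ⋃ i, A i = univ) :
    (fun i => (μ (A i)).toReal) ∈ stdSimplex ℝ ι := by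
  have hsum := measure_iUnion (μ := μ) hdisj hA
  rw [hcover, measure_univ, tsum_fintype] at hsum
  refine ⟨fun i => ENNReal.toReal_nonneg, ?_⟩
  rw [← ENNReal.toReal_sum fun i _ => measure_ne_top μ _, ← hsum, ENNReal.toReal_one]

end DiracCombination

section Approximation

variable {Q ι : Type*} [MetricSpace Q] [MeasurableSpace Q] [BorelSpace Q] [Fintype ι]

lemma levyProkhorovEDist_diracCombination_le (μ : Measure Q) [IsProbabilityMeasure μ]
    {x : ι → Q} {A : ι → Set Q} {r : ℝ} (hA : ∀ i, MeasurableSet (A i))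
    (hdisj : Pairwise (Disjoint on A)) (hcover : ⋃ i, A i = univ) (hAx : ∀ i, A i ⊆ ball (x i) r) :
    levyProkhorovEDist (diracCombination x fun i => (μ (A i)).toReal) μ ≤ ENNReal.ofReal r := by
  classical
  have := isProbabilityMeasure_diracCombination x (toReal_measure_mem_stdSimplex μ hA hdisj hcover)
  refine levyProkhorovEDist_le_of_forall_le _ _ _ fun ε B hε hε_top hB => ?_
  have hr : r < ε.toReal := by
    rcases lt_or_ge r 0 with hr | hr
    · exact hr.trans_le ENNReal.toReal_nonneg
    · exact (ENNReal.ofReal_lt_iff_lt_toReal hr hε_top.ne).1 hε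
  calc diracCombination x (fun i => (μ (A i)).toReal) B
      = ∑ i with x i ∈ B, μ (A i) := by
        simp only [diracCombination_apply _ _ hB, ENNReal.ofReal_toReal (measure_ne_top μ _)]
    _ = μ (⋃ i ∈ Finset.univ.filter (x · ∈ B), A i) :=
        (measure_biUnion_finset (fun i _ j _ hij => hdisj hij) fun i _ => hA i).symm
    _ ≤ μ (thickening ε.toReal B) + ε := by
        refine le_add_right (measure_mono (iUnion₂_subset fun i hi y hy => ?_))
        exact mem_thickening_iff.2 ⟨x i, by simpa using hi, (mem_ball.1 (hAx i hy)).trans hr⟩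

end Approximation

section PMset

variable {Q : Type*} [MetricSpace Q] [MeasurableSpace Q]

lemma PMset_eq_range (qd : ℕ → Q) (M : ℕ) :
    PMset qd M = range fun p => LevyProkhorov.ofMeasure
      (simplexProbabilityMeasure (fun j : Fin M => qd j) p) := by
  ext ⟨P⟩
  constructor
  · rintro ⟨p, hp01, hp1, hP⟩
    exact ⟨⟨p, fun j => (hp01 j).1, hp1⟩, congrArg _ (Subtype.ext hP.symm)⟩
  · rintro ⟨p, hp⟩
    cases hp
    exact ⟨p, fun j => mem_Icc_of_mem_stdSimplex p.2 j, p.2.2, rfl⟩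

lemma PMset_nonempty (qd : ℕ → Q) {M : ℕ} (hM : 1 ≤ M) : (PMset qd M).Nonempty := by
  rw [PMset_eq_range]
  exact range_nonempty_iff_nonempty.2 ⟨⟨Pi.single ⟨0, hM⟩ 1, single_mem_stdSimplex ℝ _⟩⟩

variable [BorelSpace Q]

lemma isCompact_PMset [TopologicalSpace.SeparableSpace Q] (qd : ℕ → Q) (M : ℕ) :
    IsCompact (PMset qd M) := by
  rw [PMset_eq_range]
  exact isCompact_range (LevyProkhorov.probabilityMeasureHomeomorph.continuous.comp
    (continuous_simplexProbabilityMeasure _))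

lemma eventually_exists_mem_PMset_dist_lt [CompactSpace Q] {qd : ℕ → Q} (hqd : DenseRange qd)
    (P : LevyProkhorov (ProbabilityMeasure Q)) {ε : ℝ} (hε : 0 < ε) :
    ∀ᶠ M in atTop, ∃ P' ∈ PMset qd M, dist P' P < ε := by
  obtain ⟨t, ht⟩ := isCompact_univ.elim_finite_subcover (fun j => ball (qd j) (ε / 2))
    (fun _ => isOpen_ball) fun q _ =>
      mem_iUnion.2 ((Metric.denseRange_iff.1 hqd q _ (half_pos hε)).imp fun _ => mem_ball.2)
  obtain ⟨M₀, hM₀⟩ := t.exists_nat_subset_range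
  filter_upwards [eventually_ge_atTop M₀] with M hM
  let A := disjointed fun j : Fin M => ball (qd j) (ε / 2)
  have hA : ∀ j, MeasurableSet (A j) := fun j =>
    disjointedRec (fun _ _ ht => ht.diff measurableSet_ball) measurableSet_ball
  have hcover : ⋃ j, A j = univ := by
    refine iUnion_disjointed.trans (eq_univ_of_forall fun q => ?_)
    obtain ⟨j, hj, hqj⟩ := mem_iUnion₂.1 (ht (mem_univ q))
    exact mem_iUnion.2 ⟨⟨j, (Finset.mem_range.1 (hM₀ hj)).trans_le hM⟩, hqj⟩
  have hp := toReal_measure_mem_stdSimplex P.toMeasure hA (disjoint_disjointed _) hcover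
  refine ⟨LevyProkhorov.ofMeasure (simplexProbabilityMeasure (fun j : Fin M => qd j) ⟨_, hp⟩),
    by rw [PMset_eq_range]; exact mem_range_self _, ?_⟩
  rw [LevyProkhorov.dist_probabilityMeasure_def, levyProkhorovDist]
  refine (ENNReal.toReal_le_of_le_ofReal (half_pos hε).le ?_).trans_lt (half_lt_self hε)
  exact levyProkhorovEDist_diracCombination_le _ hA (disjoint_disjointed _) hcover
    fun j => disjointed_subset _ j

end PMset

instance inst_s8 {Q : Type*} [MetricSpace Q] [CompactSpace Q] [MeasurableSpace Q] [BorelSpace Q] :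
    CompactSpace (LevyProkhorov (ProbabilityMeasure Q)) :=
  LevyProkhorov.probabilityMeasureHomeomorph.compactSpace

lemma exists_seq_mem_tendsto {X : Type*} [PseudoMetricSpace X] {T : ℕ → Set X} {x : X}
    (hne : ∀ l, (T l).Nonempty) (hT : ∀ ε > 0, ∀ᶠ l in atTop, ∃ y ∈ T l, dist y x < ε) :
    ∃ xs : ℕ → X, (∀ l, xs l ∈ T l) ∧ Tendsto xs atTop (𝓝 x) := by
  have hlt : ∀ l : ℕ, infDist x (T l) < infDist x (T l) + 1 / (l + 1) := fun l =>
    lt_add_of_pos_right _ (by positivity)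
  choose xs hxs hdist using fun l => (infDist_lt_iff (hne l)).1 (hlt l)
  refine ⟨xs, hxs, Metric.tendsto_nhds.2 fun ε hε => ?_⟩
  filter_upwards [hT (ε / 2) (half_pos hε),
    tendsto_one_div_add_atTop_nhds_zero_nat.eventually (gt_mem_nhds (half_pos hε))]
    with l ⟨y, hy, hyx⟩ hl
  calc dist (xs l) x = dist x (xs l) := dist_comm _ _
    _ < infDist x (T l) + 1 / (l + 1) := hdist l
    _ ≤ dist x y + 1 / (l + 1) := by gcongr; exact infDist_le_dist_of_mem hy
    _ < ε := by rw [dist_comm] at hyx; linarith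

section LeastSquares

variable {κ ι : Type*} [Fintype κ] [Fintype ι]

def sumSqResiduals (y yhat : κ → ι → ℝ) : ℝ :=
  ∑ i, ∑ k, (y k i - yhat k i) ^ 2

lemma continuous_sumSqResiduals (y : κ → ι → ℝ) : Continuous (sumSqResiduals y) := by
  unfold sumSqResiduals
  fun_prop

lemma tendsto_sumSqResiduals_diagonal {X : Type*} (y : κ → ι → ℝ)
    {yhatN : ℕ → κ → ι → X → ℝ} {yhat : κ → ι → X → ℝ} {Ps : ℕ → X} {P : X}
    (hconv : ∀ k i, Tendsto (fun NM : ℕ × ℕ => yhatN NM.1 k i (Ps NM.2)) (atTop ×ˢ atTop)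
      (𝓝 (yhat k i P)))
    {N : ℕ → ℕ} (hN : Tendsto N atTop atTop) :
    Tendsto (fun l => sumSqResiduals y fun k i => yhatN (N l) k i (Ps l)) atTop
      (𝓝 (sumSqResiduals y fun k i => yhat k i P)) := by
  have hdiag : Tendsto (fun l => (N l, l)) atTop (atTop ×ˢ atTop) := hN.prodMk tendsto_id
  exact ((continuous_sumSqResiduals y).tendsto _).comp
    (tendsto_pi_nhds.2 fun k => tendsto_pi_nhds.2 fun i => (hconv k i).comp hdiag)

end LeastSquares

theorem approx_estimators_exist_and_converge_general
    {Q : Type*} [MetricSpace Q] [CompactSpace Q]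
    [MeasurableSpace Q] [BorelSpace Q]
    (qd : ℕ → Q) (hqd : DenseRange qd)
    (n m : ℕ) (y : Fin n → Fin m → ℝ)
    (ybarN : ℕ → Fin n → Fin m → LevyProkhorov (ProbabilityMeasure Q) → ℝ)
    (ybar : Fin n → Fin m → LevyProkhorov (ProbabilityMeasure Q) → ℝ)
    (hB1 : ∀ N, Continuous (fun P : LevyProkhorov (ProbabilityMeasure Q) =>
      ∑ i : Fin m, ∑ k : Fin n, (y k i - ybarN N k i P) ^ 2))
    (hB2 : ∀ (P : LevyProkhorov (ProbabilityMeasure Q))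
      (Ps : ℕ → LevyProkhorov (ProbabilityMeasure Q)), Tendsto Ps atTop (nhds P) →
      ∀ k i, Tendsto (fun NM : ℕ × ℕ => ybarN NM.1 k i (Ps NM.2)) (atTop ×ˢ atTop)
        (nhds (ybar k i P))) :
    (∀ N M, 1 ≤ M → ∃ Phat ∈ PMset qd M, ∀ P' ∈ PMset qd M,
        (∑ i : Fin m, ∑ k : Fin n, (y k i - ybarN N k i Phat) ^ 2)
          ≤ ∑ i : Fin m, ∑ k : Fin n, (y k i - ybarN N k i P') ^ 2) ∧
    (∀ (Nl Ml : ℕ → ℕ), Tendsto Nl atTop atTop → Tendsto Ml atTop atTop →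
      ∀ Ph : ℕ → LevyProkhorov (ProbabilityMeasure Q),
        (∀ l, Ph l ∈ PMset qd (Ml l) ∧ ∀ P' ∈ PMset qd (Ml l),
          (∑ i : Fin m, ∑ k : Fin n, (y k i - ybarN (Nl l) k i (Ph l)) ^ 2)
            ≤ ∑ i : Fin m, ∑ k : Fin n, (y k i - ybarN (Nl l) k i P') ^ 2) →
        (∃ φ : ℕ → ℕ, StrictMono φ ∧ ∃ Pstar : LevyProkhorov (ProbabilityMeasure Q),
          Tendsto (fun l => Ph (φ l)) atTop (nhds Pstar)) ∧
        (∀ φ : ℕ → ℕ, StrictMono φ →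
          ∀ Pstar : LevyProkhorov (ProbabilityMeasure Q),
            Tendsto (fun l => Ph (φ l)) atTop (nhds Pstar) →
            ∀ P' : LevyProkhorov (ProbabilityMeasure Q),
              (∑ i : Fin m, ∑ k : Fin n, (y k i - ybar k i Pstar) ^ 2)
                ≤ ∑ i : Fin m, ∑ k : Fin n, (y k i - ybar k i P') ^ 2)) := by
  refine ⟨fun N M hM => ?_, fun Nl Ml hNl hMl Ph hPh => ⟨?_, ?_⟩⟩
  · obtain ⟨Phat, hmem, hmin⟩ :=
      (isCompact_PMset qd M).exists_isMinOn (PMset_nonempty qd hM) (hB1 N).continuousOn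
    exact ⟨Phat, hmem, fun P' hP' => hmin hP'⟩
  · obtain ⟨Pstar, φ, hφ, hlim⟩ := CompactSpace.tendsto_subseq Ph
    exact ⟨φ, hφ, Pstar, hlim⟩
  · intro φ hφ Pstar hlim P'
    have hMφ := hMl.comp hφ.tendsto_atTop
    obtain ⟨Ps, hPs_mem, hPs_lim⟩ := exists_seq_mem_tendsto (fun l => ⟨_, (hPh (φ l)).1⟩)
      fun ε hε => hMφ.eventually (eventually_exists_mem_PMset_dist_lt hqd P' hε)
    have hNφ := hNl.comp hφ.tendsto_atTop
    exact le_of_tendsto_of_tendsto'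
      (tendsto_sumSqResiduals_diagonal y (hB2 Pstar _ hlim) hNφ)
      (tendsto_sumSqResiduals_diagonal y (hB2 P' Ps hPs_lim) hNφ)
      fun l => (hPh (φ l)).2 _ (hPs_mem l)

/-- Existence of approximating finite-dimensional least-squares estimators and their
subsequential convergence to a minimizer of the limit problem: under hypotheses (B1)–(B3),
for each `N` and `M ≥ 1` the cost `J^N` has a minimizer `P̂^N_M` over `P_M(Q)`, and along any
`N_l → ∞`, `M_l → ∞`, any sequence of such minimizers has a Prohorov-convergent subsequence,
and every subsequential limit `P*` minimizes `J` over all of `P(Q)`. -/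
theorem approx_estimators_exist_and_converge
    {Q : Type*} [MetricSpace Q] [CompactSpace Q] [TopologicalSpace.SeparableSpace Q]
    [MeasurableSpace Q] [BorelSpace Q]
    (qd : ℕ → Q) (hqd : DenseRange qd)
    (n m : ℕ) (y : Fin n → Fin m → ℝ)
    (ybarN : ℕ → Fin n → Fin m → LevyProkhorov (ProbabilityMeasure Q) → ℝ)
    (ybar : Fin n → Fin m → LevyProkhorov (ProbabilityMeasure Q) → ℝ)
    (hB1 : ∀ N, Continuous (fun P : LevyProkhorov (ProbabilityMeasure Q) =>
      ∑ i : Fin m, ∑ k : Fin n, (y k i - ybarN N k i P) ^ 2))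
    (hB2 : ∀ (P : LevyProkhorov (ProbabilityMeasure Q))
      (Ps : ℕ → LevyProkhorov (ProbabilityMeasure Q)), Tendsto Ps atTop (nhds P) →
      ∀ k i, Tendsto (fun NM : ℕ × ℕ => ybarN NM.1 k i (Ps NM.2)) (atTop ×ˢ atTop)
        (nhds (ybar k i P)))
    (hB3 : ∃ C : ℝ, (∀ k i P, |ybar k i P| ≤ C) ∧ (∀ N k i P, |ybarN N k i P| ≤ C)) :
    (∀ N M, 1 ≤ M → ∃ Phat ∈ PMset qd M, ∀ P' ∈ PMset qd M,
        (∑ i : Fin m, ∑ k : Fin n, (y k i - ybarN N k i Phat) ^ 2)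
          ≤ ∑ i : Fin m, ∑ k : Fin n, (y k i - ybarN N k i P') ^ 2) ∧
    (∀ (Nl Ml : ℕ → ℕ), Tendsto Nl atTop atTop → Tendsto Ml atTop atTop →
      ∀ Ph : ℕ → LevyProkhorov (ProbabilityMeasure Q),
        (∀ l, Ph l ∈ PMset qd (Ml l) ∧ ∀ P' ∈ PMset qd (Ml l),
          (∑ i : Fin m, ∑ k : Fin n, (y k i - ybarN (Nl l) k i (Ph l)) ^ 2)
            ≤ ∑ i : Fin m, ∑ k : Fin n, (y k i - ybarN (Nl l) k i P') ^ 2) →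
        (∃ φ : ℕ → ℕ, StrictMono φ ∧ ∃ Pstar : LevyProkhorov (ProbabilityMeasure Q),
          Tendsto (fun l => Ph (φ l)) atTop (nhds Pstar)) ∧
        (∀ φ : ℕ → ℕ, StrictMono φ →
          ∀ Pstar : LevyProkhorov (ProbabilityMeasure Q),
            Tendsto (fun l => Ph (φ l)) atTop (nhds Pstar) →
            ∀ P' : LevyProkhorov (ProbabilityMeasure Q),
              (∑ i : Fin m, ∑ k : Fin n, (y k i - ybar k i Pstar) ^ 2)
                ≤ ∑ i : Fin m, ∑ k : Fin n, (y k i - ybar k i P') ^ 2)) :=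
  approx_estimators_exist_and_converge_general qd hqd n m y ybarN ybar hB1 hB2
end
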